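/- For the random consensus dynamics X(t) = A(t)X(t−1) driven by i.i.d. stochastic matrices with distribution μ, consensus in probability, consensus in L¹, and almost sure consensus (for all initial states x) are all equivalent. -/

import Mathlib

open Matrix Filter MeasureTheory ProbabilityTheory

/-! A stochastic matrix replaces each coordinate by a convex combination of the old ones, so the
diameter `D(t) = max_{i,j} |X_i(t) - X_j(t)|` is nonincreasing along every trajectory and bounded
by the diameter of the initial state. For a nonnegative, nonincreasing, uniformly bounded sequence
of random variables the three modes of convergence to `0` coincide: convergence in probability
gives almost sure convergence, because the event that `D` never drops below `ε` lies in every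
event `{ε ≤ D(t)}`; almost sure convergence gives `L¹` convergence by bounded convergence; and
`L¹` convergence gives convergence in probability by Markov's inequality. -/

noncomputable instance matrixMeasurableSpace {N : ℕ} : MeasurableSpace (Matrix (Fin N) (Fin N) ℝ) :=
  MeasurableSpace.pi (m := fun _ : Fin N => MeasurableSpace.pi)

def IsStochastic {N : ℕ} (A : Matrix (Fin N) (Fin N) ℝ) : Prop :=
  (∀ i j, 0 ≤ A i j) ∧ ∀ i, ∑ j, A i j = 1

noncomputable def diam {N : ℕ} (x : Fin N → ℝ) : ℝ := ⨆ i, ⨆ j, |x i - x j|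

theorem abs_sum_mul_le_of_sum_eq_one {ι : Type*} [Fintype ι] {w y : ι → ℝ} {c : ℝ}
    (hw : ∀ k, 0 ≤ w k) (hsum : ∑ k, w k = 1) (hy : ∀ k, |y k| ≤ c) :
    |∑ k, w k * y k| ≤ c :=
  calc |∑ k, w k * y k| ≤ ∑ k, w k * |y k| := by
        simpa only [abs_mul, abs_of_nonneg (hw _)] using
          Finset.abs_sum_le_sum_abs (fun k => w k * y k) Finset.univ
    _ ≤ ∑ k, w k * c := Finset.sum_le_sum fun k _ => mul_le_mul_of_nonneg_left (hy k) (hw k)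
    _ = c := by rw [← Finset.sum_mul, hsum, one_mul]

section diam

variable {N : ℕ}

theorem abs_sub_le_diam (x : Fin N → ℝ) (i j : Fin N) : |x i - x j| ≤ diam x :=
  (le_ciSup (Set.finite_range _).bddAbove j).trans
    (le_ciSup (f := fun i => ⨆ j, |x i - x j|) (Set.finite_range _).bddAbove i)

theorem diam_nonneg (x : Fin N → ℝ) : 0 ≤ diam x :=
  Real.iSup_nonneg fun _ => Real.iSup_nonneg fun _ => abs_nonneg _

theorem diam_le {x : Fin N → ℝ} {c : ℝ} (hc : 0 ≤ c) (h : ∀ i j, |x i - x j| ≤ c) :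
    diam x ≤ c :=
  Real.iSup_le (fun i => Real.iSup_le (h i) hc) hc

theorem measurable_diam : Measurable (diam : (Fin N → ℝ) → ℝ) := by
  unfold diam
  fun_prop

theorem IsStochastic.mulVec_sub_const {A : Matrix (Fin N) (Fin N) ℝ} (hA : IsStochastic A)
    (x : Fin N → ℝ) (i : Fin N) (a : ℝ) : A.mulVec x i - a = ∑ k, A i k * (x k - a) := by
  simp only [mul_sub, Finset.sum_sub_distrib, ← Finset.sum_mul, hA.2 i, one_mul, mulVec,
    dotProduct]

theorem IsStochastic.diam_mulVec_le {A : Matrix (Fin N) (Fin N) ℝ} (hA : IsStochastic A)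
    (x : Fin N → ℝ) : diam (A.mulVec x) ≤ diam x := by
  have hrow : ∀ i (y : Fin N → ℝ), (∀ k, |y k| ≤ diam x) →
      |∑ k, A i k * y k| ≤ diam x :=
    fun i _ => abs_sum_mul_le_of_sum_eq_one (hA.1 i) (hA.2 i)
  refine diam_le (diam_nonneg x) fun i j => ?_
  -- `(Ax)_i - (Ax)_j = ∑ₖ A_ik (x_k - (Ax)_j)`, and `(Ax)_j - x_k = ∑ₗ A_jl (x_l - x_k)`.
  rw [hA.mulVec_sub_const]
  refine hrow i _ fun k => ?_
  rw [abs_sub_comm, hA.mulVec_sub_const]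
  exact hrow j _ fun l => abs_sub_le_diam x l k

end diam

theorem Measurable.matrix_mulVec {N : ℕ} {Ω : Type*} [MeasurableSpace Ω]
    {A : Ω → Matrix (Fin N) (Fin N) ℝ} {v : Ω → Fin N → ℝ} (hA : Measurable A)
    (hv : Measurable v) : Measurable fun ω => (A ω).mulVec (v ω) := by
  refine measurable_pi_lambda _ fun i => ?_
  simp only [mulVec, dotProduct]
  fun_prop

theorem measurable_of_eq_mulVec_succ {N : ℕ} {Ω : Type*} [MeasurableSpace Ω]
    {A : ℕ → Ω → Matrix (Fin N) (Fin N) ℝ} {X : ℕ → Ω → Fin N → ℝ}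
    (hA : ∀ t, Measurable (A t)) (h0 : Measurable (X 0))
    (hrec : ∀ t ω, X (t + 1) ω = (A (t + 1) ω).mulVec (X t ω)) (t : ℕ) :
    Measurable (X t) := by
  induction t with
  | zero => exact h0
  | succ t ih => simpa only [← funext (hrec t)] using (hA (t + 1)).matrix_mulVec ih

theorem antitone_diam_of_eq_mulVec_succ {N : ℕ} {A : ℕ → Matrix (Fin N) (Fin N) ℝ}
    {X : ℕ → Fin N → ℝ} (hA : ∀ t, IsStochastic (A t))
    (hrec : ∀ t, X (t + 1) = (A (t + 1)).mulVec (X t)) : Antitone fun t => diam (X t) :=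
  antitone_nat_of_succ_le fun t => by
    simpa only [hrec t] using (hA (t + 1)).diam_mulVec_le (X t)

theorem tendsto_zero_of_antitone_of_exists_lt {u : ℕ → ℝ} (hu : Antitone u)
    (h0 : ∀ t, 0 ≤ u t) (h : ∀ n : ℕ, ∃ t, u t < 1 / (n + 1)) :
    Tendsto u atTop (nhds 0) := by
  refine tendsto_order.2 ⟨fun a ha => Eventually.of_forall fun t => ha.trans_le (h0 t),
    fun b hb => ?_⟩
  obtain ⟨n, hn⟩ := exists_nat_one_div_lt hb
  obtain ⟨t, ht⟩ := h n
  exact eventually_atTop.2 ⟨t, fun s hs => ((hu hs).trans_lt ht).trans hn⟩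

section ModesOfConvergence

variable {Ω : Type*} [MeasurableSpace Ω] {P : Measure Ω} {f : ℕ → Ω → ℝ}

theorem ae_tendsto_zero_of_tendsto_measure_ge (hf0 : ∀ t ω, 0 ≤ f t ω)
    (hf : ∀ ω, Antitone fun t => f t ω)
    (h : ∀ ε > (0 : ℝ), Tendsto (fun t => P {ω | ε ≤ f t ω}) atTop (nhds 0)) :
    ∀ᵐ ω ∂P, Tendsto (fun t => f t ω) atTop (nhds 0) := by
  have exists_lt : ∀ ε > (0 : ℝ), ∀ᵐ ω ∂P, ∃ t, f t ω < ε := by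
    intro ε hε
    simp only [ae_iff, not_exists, not_lt]
    exact le_antisymm (ge_of_tendsto' (h ε hε) fun t => measure_mono fun ω hω => hω t) bot_le
  filter_upwards [ae_all_iff.2 fun n : ℕ => exists_lt (1 / (n + 1)) Nat.one_div_pos_of_nat]
    with ω hω
  exact tendsto_zero_of_antitone_of_exists_lt (hf ω) (hf0 · ω) hω

theorem tendsto_measure_ge_of_tendsto_integral (hf0 : ∀ t ω, 0 ≤ f t ω)
    (hint : ∀ t, Integrable (f t) P)
    (h : Tendsto (fun t => ∫ ω, f t ω ∂P) atTop (nhds 0)) :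
    ∀ ε > (0 : ℝ), Tendsto (fun t => P {ω | ε ≤ f t ω}) atTop (nhds 0) := by
  intro ε hε
  have hfin : ∀ t, P {ω | ε ≤ f t ω} ≠ ⊤ := fun t => ((hint t).measure_ge_lt_top hε).ne
  rw [← ENNReal.tendsto_toReal_iff hfin ENNReal.zero_ne_top, ENNReal.toReal_zero]
  have markov : ∀ t, P.real {ω | ε ≤ f t ω} ≤ ε⁻¹ * ∫ ω, f t ω ∂P := fun t => by
    rw [le_inv_mul_iff₀ hε]
    exact mul_meas_ge_le_integral_of_nonneg (ae_of_all _ (hf0 t)) (hint t) ε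
  exact squeeze_zero (fun t => ENNReal.toReal_nonneg) markov (by simpa using h.const_mul ε⁻¹)

end ModesOfConvergence

theorem consensus_three_modes_equiv_general {N : ℕ} {Ω : Type*} [MeasurableSpace Ω]
    (P : Measure Ω) [IsProbabilityMeasure P]
    (A : ℕ → Ω → Matrix (Fin N) (Fin N) ℝ)
    (hmeas : ∀ t, Measurable (A t))
    (hstoch : ∀ t ω, IsStochastic (A t ω))
    (X : (Fin N → ℝ) → ℕ → Ω → Fin N → ℝ)
    (hX0 : ∀ x, X x 0 = fun _ => x)
    (hrec : ∀ x t ω, X x (t + 1) ω = (A (t + 1) ω).mulVec (X x t ω)) :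
    ((∀ x, ∀ ε > (0:ℝ),
        Tendsto (fun t => P {ω | ε ≤ diam (X x t ω)}) atTop (nhds 0)) ↔
      (∀ x, Tendsto (fun t => ∫ ω, diam (X x t ω) ∂P) atTop (nhds 0))) ∧
    ((∀ x, Tendsto (fun t => ∫ ω, diam (X x t ω) ∂P) atTop (nhds 0)) ↔
      (∀ x, ∀ᵐ ω ∂P, Tendsto (fun t => diam (X x t ω)) atTop (nhds 0))) := by
  have hanti : ∀ x ω, Antitone fun t => diam (X x t ω) := fun x ω =>
    antitone_diam_of_eq_mulVec_succ (hstoch · ω) (hrec x · ω)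
  have hbound : ∀ x t ω, ‖diam (X x t ω)‖ ≤ diam x := fun x t ω => by
    simpa only [Real.norm_eq_abs, abs_of_nonneg (diam_nonneg _), hX0] using
      hanti x ω (Nat.zero_le t)
  have hmeasD : ∀ x t, Measurable fun ω => diam (X x t ω) := fun x t =>
    measurable_diam.comp <| measurable_of_eq_mulVec_succ hmeas (by simp [hX0]) (hrec x) t
  have as_of_prob x := ae_tendsto_zero_of_tendsto_measure_ge (P := P)
    (fun t ω => diam_nonneg (X x t ω)) (hanti x)
  have L1_of_as x (h : ∀ᵐ ω ∂P, Tendsto (fun t => diam (X x t ω)) atTop (nhds 0)) :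
      Tendsto (fun t => ∫ ω, diam (X x t ω) ∂P) atTop (nhds 0) := by
    simpa using tendsto_integral_filter_of_norm_le_const
      (Eventually.of_forall fun t => (hmeasD x t).aestronglyMeasurable)
      ⟨diam x, Eventually.of_forall fun t => ae_of_all _ (hbound x t)⟩ h
  have prob_of_L1 x := tendsto_measure_ge_of_tendsto_integral (P := P)
    (fun t ω => diam_nonneg (X x t ω)) fun t =>
      (integrable_const (diam x)).mono' (hmeasD x t).aestronglyMeasurable
        (ae_of_all _ (hbound x t))
  exact ⟨⟨fun h x => L1_of_as x (as_of_prob x (h x)), fun h x => prob_of_L1 x (h x)⟩,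
    ⟨fun h x => as_of_prob x (prob_of_L1 x (h x)), fun h x => L1_of_as x (h x)⟩⟩

/-- For the random consensus dynamics `X(t) = A(t) X(t-1)` driven by i.i.d. stochastic
matrices, consensus in probability, consensus in `L¹`, and almost sure consensus
(for all initial states) are equivalent. -/
theorem consensus_three_modes_equiv {N : ℕ} {Ω : Type*} [MeasurableSpace Ω]
    (P : Measure Ω) [IsProbabilityMeasure P]
    (A : ℕ → Ω → Matrix (Fin N) (Fin N) ℝ)
    (hmeas : ∀ t, Measurable (A t))
    (hstoch : ∀ t ω, IsStochastic (A t ω))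
    (hindep : iIndepFun A P)
    (hident : ∀ s t, Measure.map (A s) P = Measure.map (A t) P)
    (X : (Fin N → ℝ) → ℕ → Ω → Fin N → ℝ)
    (hX0 : ∀ x, X x 0 = fun _ => x)
    (hrec : ∀ x t ω, X x (t + 1) ω = (A (t + 1) ω).mulVec (X x t ω)) :
    ((∀ x, ∀ ε > (0:ℝ),
        Tendsto (fun t => P {ω | ε ≤ diam (X x t ω)}) atTop (nhds 0)) ↔
      (∀ x, Tendsto (fun t => ∫ ω, diam (X x t ω) ∂P) atTop (nhds 0))) ∧
    ((∀ x, Tendsto (fun t => ∫ ω, diam (X x t ω) ∂P) atTop (nhds 0)) ↔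
      (∀ x, ∀ᵐ ω ∂P, Tendsto (fun t => diam (X x t ω)) atTop (nhds 0))) :=
  consensus_three_modes_equiv_general P A hmeas hstoch X hX0 hrec
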